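/- arXiv:2211.10420 — 3 statements merged into one kernel-verified Lean document; each statement's English description precedes it below -/
import Mathlib

section
/- Rounding algorithm guarantee (Altschuler–Niles-Weed–Rigollet): given a nonnegative matrix γ ∈ ℝ₊^{m×n} with entries summing to 1, and probability vectors μ ∈ Δ_m, ν ∈ Δ_n with positive entries, the rounded matrix R(γ) produced by the two-step capped scaling followed by a rank-one correction satisfies R(γ) ∈ T(μ,ν) and ‖R(γ) − γ‖₁ ≤ 2(‖γ1_n − μ‖₁ + ‖γᵀ1_m − ν‖₁). -/
noncomputable def l1 {m n : ℕ} (A : Matrix (Fin m) (Fin n) ℝ) : ℝ :=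
  ∑ i, ∑ j, |A i j|

noncomputable def l1v {m : ℕ} (x : Fin m → ℝ) : ℝ := ∑ i, |x i|

def rowSum {m n : ℕ} (A : Matrix (Fin m) (Fin n) ℝ) (i : Fin m) : ℝ := ∑ j, A i j

def colSum {m n : ℕ} (A : Matrix (Fin m) (Fin n) ℝ) (j : Fin n) : ℝ := ∑ i, A i j

/-- The rounding algorithm of Altschuler–Niles-Weed–Rigollet: cap and rescale rows so row
sums do not exceed `μ`, then columns so column sums do not exceed `ν`, then add a rank-one
correction to restore the marginals exactly. -/
noncomputable def roundMat {m n : ℕ} (μ : Fin m → ℝ) (ν : Fin n → ℝ)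
    (γ : Matrix (Fin m) (Fin n) ℝ) : Matrix (Fin m) (Fin n) ℝ :=
  let γ' : Matrix (Fin m) (Fin n) ℝ := fun i j => min (μ i / rowSum γ i) 1 * γ i j
  let γ'' : Matrix (Fin m) (Fin n) ℝ := fun i j => γ' i j * min (ν j / colSum γ' j) 1
  let er : Fin m → ℝ := fun i => μ i - rowSum γ'' i
  let ec : Fin n → ℝ := fun j => ν j - colSum γ'' j
  fun i j => γ'' i j + er i * ec j / l1v er

/-!
Capping the rows and then the columns only removes mass, so the capped matrix `B` satisfies
`0 ≤ B ≤ γ`, with row sums at most `μ` and column sums at most `ν`. Its row and column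
deficits then have the same total `s = 1 - ∑ B`, so adding their outer product divided by
`s` restores both marginals exactly while adding mass `s = ‖γ - B‖₁`; hence
`‖R(γ) - γ‖₁ ≤ 2 s`. The mass removed by each capping step is the positive part of the
excess of the corresponding marginal, which is at most its `ℓ¹` distance to `μ`, resp. `ν`.
-/

open Finset

section

variable {m n : ℕ}

noncomputable def capRows (μ : Fin m → ℝ) (γ : Matrix (Fin m) (Fin n) ℝ) :
    Matrix (Fin m) (Fin n) ℝ :=
  fun i j => min (μ i / rowSum γ i) 1 * γ i j

noncomputable def capCols (ν : Fin n → ℝ) (A : Matrix (Fin m) (Fin n) ℝ) :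
    Matrix (Fin m) (Fin n) ℝ :=
  fun i j => A i j * min (ν j / colSum A j) 1

noncomputable def deficitOuter (μ : Fin m → ℝ) (ν : Fin n → ℝ)
    (B : Matrix (Fin m) (Fin n) ℝ) :
    Matrix (Fin m) (Fin n) ℝ :=
  fun i j => (μ i - rowSum B i) * (ν j - colSum B j) / l1v (fun i => μ i - rowSum B i)

theorem roundMat_eq (μ : Fin m → ℝ) (ν : Fin n → ℝ) (γ : Matrix (Fin m) (Fin n) ℝ) :
    roundMat μ ν γ =
      capCols ν (capRows μ γ) + deficitOuter μ ν (capCols ν (capRows μ γ)) :=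
  rfl

theorem sum_rowSum_eq_sum_colSum (A : Matrix (Fin m) (Fin n) ℝ) :
    ∑ i, rowSum A i = ∑ j, colSum A j :=
  sum_comm

theorem rowSum_le_rowSum {A B : Matrix (Fin m) (Fin n) ℝ} (h : ∀ i j, A i j ≤ B i j)
    (i : Fin m) :
    rowSum A i ≤ rowSum B i :=
  sum_le_sum fun j _ => h i j

theorem colSum_le_colSum {A B : Matrix (Fin m) (Fin n) ℝ} (h : ∀ i j, A i j ≤ B i j)
    (j : Fin n) :
    colSum A j ≤ colSum B j :=
  sum_le_sum fun i _ => h i j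

theorem eq_zero_of_l1v_eq_zero {x : Fin m → ℝ} (h : l1v x = 0) (i : Fin m) : x i = 0 :=
  abs_eq_zero.1 <| (sum_eq_zero_iff_of_nonneg fun i _ => abs_nonneg (x i)).1 h i (mem_univ i)

theorem min_div_one_mul {a r : ℝ} (ha : 0 ≤ a) (hr : 0 ≤ r) :
    min (a / r) 1 * r = min a r := by
  rw [min_mul_of_nonneg _ _ hr, one_mul]
  rcases hr.eq_or_lt with rfl | hr
  · simp [ha]
  · rw [div_mul_cancel₀ _ hr.ne']

theorem sub_min_le_abs_sub {a x y : ℝ} (h : x ≤ y) : x - min a x ≤ |y - a| := by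
  rcases le_total a x with hax | hxa
  · rw [min_eq_left hax]
    exact (sub_le_sub_right h a).trans (le_abs_self _)
  · rw [min_eq_right hxa, sub_self]
    exact abs_nonneg _

section capping

variable {μ : Fin m → ℝ} {ν : Fin n → ℝ} {γ A : Matrix (Fin m) (Fin n) ℝ}

theorem capRows_nonneg (hμ : ∀ i, 0 ≤ μ i) (hγ : ∀ i j, 0 ≤ γ i j)
    (i : Fin m) (j : Fin n) :
    0 ≤ capRows μ γ i j :=
  mul_nonneg (le_min (div_nonneg (hμ i) (sum_nonneg fun j _ => hγ i j)) zero_le_one) (hγ i j)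

theorem capRows_le (hγ : ∀ i j, 0 ≤ γ i j) (i : Fin m) (j : Fin n) :
    capRows μ γ i j ≤ γ i j :=
  mul_le_of_le_one_left (hγ i j) (min_le_right _ 1)

theorem rowSum_capRows (hμ : ∀ i, 0 ≤ μ i) (hγ : ∀ i j, 0 ≤ γ i j) (i : Fin m) :
    rowSum (capRows μ γ) i = min (μ i) (rowSum γ i) := by
  rw [← min_div_one_mul (r := rowSum γ i) (hμ i) (sum_nonneg fun j _ => hγ i j)]
  exact (mul_sum _ _ _).symm

theorem capCols_nonneg (hν : ∀ j, 0 ≤ ν j) (hA : ∀ i j, 0 ≤ A i j)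
    (i : Fin m) (j : Fin n) :
    0 ≤ capCols ν A i j :=
  mul_nonneg (hA i j) (le_min (div_nonneg (hν j) (sum_nonneg fun i _ => hA i j)) zero_le_one)

theorem capCols_le (hA : ∀ i j, 0 ≤ A i j) (i : Fin m) (j : Fin n) :
    capCols ν A i j ≤ A i j :=
  mul_le_of_le_one_right (hA i j) (min_le_right _ 1)

theorem colSum_capCols (hν : ∀ j, 0 ≤ ν j) (hA : ∀ i j, 0 ≤ A i j) (j : Fin n) :
    colSum (capCols ν A) j = min (ν j) (colSum A j) := by
  rw [← min_div_one_mul (r := colSum A j) (hν j) (sum_nonneg fun i _ => hA i j), mul_comm]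
  exact (sum_mul _ _ _).symm

theorem sum_sub_sum_capRows_le (hμ : ∀ i, 0 ≤ μ i) (hγ : ∀ i j, 0 ≤ γ i j) :
    ∑ i, ∑ j, γ i j - ∑ i, ∑ j, capRows μ γ i j ≤
      l1v (fun i => rowSum γ i - μ i) := by
  change ∑ i, rowSum γ i - ∑ i, rowSum (capRows μ γ) i ≤ _
  rw [← sum_sub_distrib]
  exact sum_le_sum fun i _ => rowSum_capRows hμ hγ i ▸ sub_min_le_abs_sub le_rfl

theorem sum_sub_sum_capCols_le (hν : ∀ j, 0 ≤ ν j) (hA : ∀ i j, 0 ≤ A i j)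
    (hAγ : ∀ i j, A i j ≤ γ i j) :
    ∑ i, ∑ j, A i j - ∑ i, ∑ j, capCols ν A i j ≤ l1v (fun j => colSum γ j - ν j) := by
  change ∑ i, rowSum A i - ∑ i, rowSum (capCols ν A) i ≤ _
  rw [sum_rowSum_eq_sum_colSum, sum_rowSum_eq_sum_colSum, ← sum_sub_distrib]
  exact sum_le_sum fun j _ =>
    colSum_capCols hν hA j ▸ sub_min_le_abs_sub (colSum_le_colSum hAγ j)

theorem sum_sub_sum_capCols_capRows_le (hμ : ∀ i, 0 ≤ μ i) (hν : ∀ j, 0 ≤ ν j)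
    (hγ : ∀ i j, 0 ≤ γ i j) :
    ∑ i, ∑ j, γ i j - ∑ i, ∑ j, capCols ν (capRows μ γ) i j ≤
      l1v (fun i => rowSum γ i - μ i) + l1v (fun j => colSum γ j - ν j) := by
  have hrows := sum_sub_sum_capRows_le hμ hγ
  have hcols := sum_sub_sum_capCols_le hν (capRows_nonneg hμ hγ) (capRows_le (μ := μ) hγ)
  linarith

end capping

section deficit

variable {μ : Fin m → ℝ} {ν : Fin n → ℝ} {B : Matrix (Fin m) (Fin n) ℝ}

theorem rowSum_add (A B : Matrix (Fin m) (Fin n) ℝ) (i : Fin m) :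
    rowSum (A + B) i = rowSum A i + rowSum B i :=
  sum_add_distrib

theorem colSum_add (A B : Matrix (Fin m) (Fin n) ℝ) (j : Fin n) :
    colSum (A + B) j = colSum A j + colSum B j :=
  sum_add_distrib

theorem l1v_rowDeficit (hrow : ∀ i, rowSum B i ≤ μ i) :
    l1v (fun i => μ i - rowSum B i) = ∑ i, (μ i - rowSum B i) :=
  sum_congr rfl fun i _ => abs_of_nonneg (sub_nonneg.2 (hrow i))

theorem sum_colDeficit (hμν : ∑ i, μ i = ∑ j, ν j) :
    ∑ j, (ν j - colSum B j) = ∑ i, (μ i - rowSum B i) := by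
  rw [sum_sub_distrib, sum_sub_distrib, sum_rowSum_eq_sum_colSum, hμν]

theorem deficitOuter_nonneg (hrow : ∀ i, rowSum B i ≤ μ i) (hcol : ∀ j, colSum B j ≤ ν j)
    (i : Fin m) (j : Fin n) : 0 ≤ deficitOuter μ ν B i j :=
  div_nonneg (mul_nonneg (sub_nonneg.2 (hrow i)) (sub_nonneg.2 (hcol j)))
    (sum_nonneg fun _ _ => abs_nonneg _)

theorem rowSum_deficitOuter (hrow : ∀ i, rowSum B i ≤ μ i) (hμν : ∑ i, μ i = ∑ j, ν j)
    (i : Fin m) : rowSum (deficitOuter μ ν B) i = μ i - rowSum B i := by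
  simp only [rowSum, deficitOuter]
  rw [← sum_div, ← mul_sum, sum_colDeficit hμν, ← l1v_rowDeficit hrow]
  exact mul_div_cancel_of_imp fun h => eq_zero_of_l1v_eq_zero h i

theorem colSum_deficitOuter (hrow : ∀ i, rowSum B i ≤ μ i) (hcol : ∀ j, colSum B j ≤ ν j)
    (hμν : ∑ i, μ i = ∑ j, ν j) (j : Fin n) :
    colSum (deficitOuter μ ν B) j = ν j - colSum B j := by
  simp only [colSum, deficitOuter]
  rw [← sum_div, ← sum_mul, ← l1v_rowDeficit hrow]
  refine mul_div_cancel_left_of_imp fun h => ?_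
  -- if the total deficit vanishes, so does every (nonnegative) column deficit
  rw [l1v_rowDeficit hrow, ← sum_colDeficit hμν] at h
  exact (sum_eq_zero_iff_of_nonneg fun j _ => sub_nonneg.2 (hcol j)).1 h j (mem_univ j)

theorem l1_add_deficitOuter_sub_le {γ : Matrix (Fin m) (Fin n) ℝ}
    (hBγ : ∀ i j, B i j ≤ γ i j) (hrow : ∀ i, rowSum B i ≤ μ i)
    (hcol : ∀ j, colSum B j ≤ ν j) (hμν : ∑ i, μ i = ∑ j, ν j)
    (hγμ : ∑ i, ∑ j, γ i j = ∑ i, μ i) :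
    l1 (B + deficitOuter μ ν B - γ) ≤ 2 * (∑ i, ∑ j, γ i j - ∑ i, ∑ j, B i j) := by
  set D := deficitOuter μ ν B
  have hentry (i : Fin m) (j : Fin n) : |B i j + D i j - γ i j| ≤ (γ i j - B i j) + D i j :=
    calc |B i j + D i j - γ i j| = |(B i j - γ i j) + D i j| := by rw [add_sub_right_comm]
      _ ≤ |B i j - γ i j| + |D i j| := abs_add_le _ _
      _ = (γ i j - B i j) + D i j := by
        rw [abs_of_nonpos (sub_nonpos.2 (hBγ i j)),
          abs_of_nonneg (deficitOuter_nonneg hrow hcol i j), neg_sub]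
  have hmassD : ∑ i, ∑ j, D i j = ∑ i, μ i - ∑ i, ∑ j, B i j := by
    change ∑ i, rowSum D i = _
    simp only [D, rowSum_deficitOuter hrow hμν, sum_sub_distrib]
    rfl
  calc l1 (B + D - γ) ≤ ∑ i, ∑ j, ((γ i j - B i j) + D i j) :=
        sum_le_sum fun i _ => sum_le_sum fun j _ => hentry i j
    _ = 2 * (∑ i, ∑ j, γ i j - ∑ i, ∑ j, B i j) := by
        simp only [sum_add_distrib, sum_sub_distrib] at hmassD ⊢
        rw [hmassD, hγμ]
        ring

end deficit

end

/-- Rounding guarantee: for a nonnegative matrix `γ` with entries summing to 1 and positive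
probability vectors `μ, ν`, the rounded matrix lies in the transport polytope `T(μ,ν)` and
`‖R(γ) − γ‖₁ ≤ 2(‖γ1_n − μ‖₁ + ‖γᵀ1_m − ν‖₁)`. -/
theorem roundMat_mem_and_close {m n : ℕ} (μ : Fin m → ℝ) (ν : Fin n → ℝ)
    (γ : Matrix (Fin m) (Fin n) ℝ)
    (hγ0 : ∀ i j, 0 ≤ γ i j) (hγ1 : ∑ i, ∑ j, γ i j = 1)
    (hμ0 : ∀ i, 0 < μ i) (hμ1 : ∑ i, μ i = 1)
    (hν0 : ∀ j, 0 < ν j) (hν1 : ∑ j, ν j = 1) :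
    ((∀ i j, 0 ≤ roundMat μ ν γ i j) ∧ (∀ i, rowSum (roundMat μ ν γ) i = μ i) ∧
      (∀ j, colSum (roundMat μ ν γ) j = ν j)) ∧
    l1 (roundMat μ ν γ - γ) ≤
      2 * (l1v (fun i => rowSum γ i - μ i) + l1v (fun j => colSum γ j - ν j)) := by
  set B := capCols ν (capRows μ γ)
  have hμ (i : Fin m) : 0 ≤ μ i := (hμ0 i).le
  have hν (j : Fin n) : 0 ≤ ν j := (hν0 j).le
  have hA0 := capRows_nonneg hμ hγ0
  have hBγ (i : Fin m) (j : Fin n) : B i j ≤ γ i j :=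
    (capCols_le hA0 i j).trans (capRows_le hγ0 i j)
  have hrow (i : Fin m) : rowSum B i ≤ μ i :=
    (rowSum_le_rowSum (capCols_le hA0) i).trans (rowSum_capRows hμ hγ0 i ▸ min_le_left _ _)
  have hcol (j : Fin n) : colSum B j ≤ ν j := colSum_capCols hν hA0 j ▸ min_le_left _ _
  have hμν : ∑ i, μ i = ∑ j, ν j := hμ1.trans hν1.symm
  rw [roundMat_eq]
  refine ⟨⟨fun i j =>
      add_nonneg (capCols_nonneg hν hA0 i j) (deficitOuter_nonneg hrow hcol i j),
    fun i => by rw [rowSum_add, rowSum_deficitOuter hrow hμν, add_sub_cancel],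
    fun j => by rw [colSum_add, colSum_deficitOuter hrow hcol hμν, add_sub_cancel]⟩, ?_⟩
  calc l1 (B + deficitOuter μ ν B - γ) ≤ 2 * (∑ i, ∑ j, γ i j - ∑ i, ∑ j, B i j) :=
        l1_add_deficitOuter_sub_le hBγ hrow hcol hμν (hγ1.trans hμ1.symm)
    _ ≤ _ := by grw [sum_sub_sum_capCols_capRows_le hμ hν hγ0]
end

section
/- Three-point identity for a Mirror Sinkhorn step with row normalization: if γ_t has positive entries, γ'_{t+1} = γ_t ⊙ exp(−η C) for some matrix C and η > 0, and γ_{t+1} = Diag(μ ⊘ (γ'_{t+1}1_n)) γ'_{t+1}, then for every γ* ∈ T(μ,ν): D_KL(γ*, γ_t) − D_KL(γ*, γ_{t+1}) = D_KL(γ_{t+1}, γ_t) + η⟨C, γ_{t+1} − γ*⟩. -/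
/-- Relative entropy `D_KL(A,B) = ⟨A, log A − log B⟩ + ⟨B − A, 1⟩`. -/
noncomputable def DKL {m n : ℕ} (A B : Matrix (Fin m) (Fin n) ℝ) : ℝ :=
  ∑ i, ∑ j, (A i j * (Real.log (A i j) - Real.log (B i j)) + (B i j - A i j))

/-- Three-point identity for a Mirror Sinkhorn step with row normalization: with
`γ'_{t+1} = γ_t ⊙ exp(−ηC)` and `γ_{t+1} = Diag(μ ⊘ (γ'_{t+1}1_n)) γ'_{t+1}`, for every
`γ* ∈ T(μ,ν)`:
`D_KL(γ*, γ_t) − D_KL(γ*, γ_{t+1}) = D_KL(γ_{t+1}, γ_t) + η⟨C, γ_{t+1} − γ*⟩`. -/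
theorem mirror_sinkhorn_three_point {m n : ℕ} (μ : Fin m → ℝ) (ν : Fin n → ℝ)
    (hμ0 : ∀ i, 0 < μ i) (hμ1 : ∑ i, μ i = 1)
    (hν0 : ∀ j, 0 < ν j) (hν1 : ∑ j, ν j = 1)
    (γt C γs : Matrix (Fin m) (Fin n) ℝ) (η : ℝ)
    (hγt : ∀ i j, 0 < γt i j) (hη : 0 < η)
    (hγs0 : ∀ i j, 0 ≤ γs i j)
    (hγsr : ∀ i, rowSum γs i = μ i) (hγsc : ∀ j, colSum γs j = ν j)
    (γ' γt1 : Matrix (Fin m) (Fin n) ℝ)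
    (hγ' : γ' = fun i j => γt i j * Real.exp (-η * C i j))
    (hγt1 : γt1 = fun i j => μ i / rowSum γ' i * γ' i j) :
    DKL γs γt - DKL γs γt1 =
      DKL γt1 γt + η * (∑ i, ∑ j, C i j * (γt1 i j - γs i j)) := by
  have hne : (Finset.univ : Finset (Fin n)).Nonempty := by
    by_contra h
    rw [Finset.not_nonempty_iff_eq_empty] at h
    rw [h, Finset.sum_empty] at hν1
    norm_num at hν1
  have hr : ∀ i, 0 < rowSum γ' i := by
    intro i
    apply Finset.sum_pos _ hne
    intro j _
    rw [hγ']
    exact mul_pos (hγt i j) (Real.exp_pos _)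
  have hlog : ∀ i j, Real.log (γt1 i j) =
      Real.log (μ i / rowSum γ' i) + Real.log (γt i j) + (-η * C i j) := by
    intro i j
    rw [hγt1]
    simp only
    rw [Real.log_mul (div_pos (hμ0 i) (hr i)).ne' (by rw [hγ']; exact (mul_pos (hγt i j) (Real.exp_pos _)).ne')]
    rw [hγ']
    simp only
    rw [Real.log_mul (hγt i j).ne' (Real.exp_pos _).ne', Real.log_exp]
    ring
  have hrowt1 : ∀ i, ∑ j, γt1 i j = μ i := by
    intro i
    rw [hγt1]
    simp only
    rw [← Finset.mul_sum]
    have : ∑ j, γ' i j = rowSum γ' i := rfl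
    rw [this]
    rw [div_mul_comm, div_self (hr i).ne', one_mul]
  simp only [DKL]
  rw [Finset.mul_sum, ← Finset.sum_sub_distrib, ← Finset.sum_add_distrib]
  apply Finset.sum_congr rfl
  intro i _
  have key : (∑ j, (γs i j * (Real.log (γs i j) - Real.log (γt i j)) + (γt i j - γs i j)))
      - (∑ j, (γs i j * (Real.log (γs i j) - Real.log (γt1 i j)) + (γt1 i j - γs i j)))
      - ((∑ j, (γt1 i j * (Real.log (γt1 i j) - Real.log (γt i j)) + (γt i j - γt1 i j)))
        + η * ∑ j, C i j * (γt1 i j - γs i j))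
      = ∑ j, Real.log (μ i / rowSum γ' i) * (γs i j - γt1 i j) := by
    rw [Finset.mul_sum, ← Finset.sum_add_distrib, ← Finset.sum_sub_distrib,
      ← Finset.sum_sub_distrib]
    apply Finset.sum_congr rfl
    intro j _
    rw [hlog i j]
    ring
  have hz : ∑ j, Real.log (μ i / rowSum γ' i) * (γs i j - γt1 i j) = 0 := by
    rw [← Finset.mul_sum, Finset.sum_sub_distrib, hrowt1 i]
    have : ∑ j, γs i j = μ i := hγsr i
    rw [this]
    ring
  rw [hz] at key
  rw [Finset.mul_sum] at key ⊢
  linarith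
end

section
/- Invariance of Mirror Sinkhorn under marginal regularization: if the objective f is replaced by f^reg(γ) = f(γ) + R_μ(γ1_n) + R_ν(γᵀ1_m), where R_μ and R_ν are differentiable convex functions whose gradients vanish exactly at μ and ν respectively, then the iterates of the Mirror Sinkhorn algorithm (alternating multiplicative gradient step and row/column normalization, initialized at μνᵀ) are identical for f and f^reg. -/
/-- One step of the Mirror Sinkhorn algorithm: a multiplicative gradient update followed
by row normalization (for even `t`) or column normalization (for odd `t`). -/
noncomputable def msStep {m n : ℕ} (μ : Fin m → ℝ) (ν : Fin n → ℝ)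
    (grad : Matrix (Fin m) (Fin n) ℝ → Matrix (Fin m) (Fin n) ℝ)
    (η : ℕ → ℝ) (t : ℕ) (γ : Matrix (Fin m) (Fin n) ℝ) : Matrix (Fin m) (Fin n) ℝ :=
  let γ' : Matrix (Fin m) (Fin n) ℝ := fun i j => γ i j * Real.exp (-(η t) * grad γ i j)
  if t % 2 = 0 then (fun i j => μ i / rowSum γ' i * γ' i j)
  else (fun i j => γ' i j * (ν j / colSum γ' j))

/-! The regularization changes the gradient at `γ` by `∇R_μ(γ1_n)_i + ∇R_ν(γᵀ1_m)_j`. Before a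
row normalization the iterate already has column marginal `ν` (it is the output of a column
normalization, or `μνᵀ`), so the `R_ν` term vanishes, and the `R_μ` term multiplies row `i` by
a constant, which the row normalization cancels. Column steps are symmetric. Positivity of the
iterates keeps all normalizing sums nonzero, so every normalization attains its marginal. -/

open Finset

noncomputable section MirrorSinkhorn

variable {m n : ℕ}

def mirrorUpdate (s : ℝ) (G A : Matrix (Fin m) (Fin n) ℝ) : Matrix (Fin m) (Fin n) ℝ :=
  fun i j => A i j * Real.exp (-s * G i j)

def rowNormalize (μ : Fin m → ℝ) (A : Matrix (Fin m) (Fin n) ℝ) : Matrix (Fin m) (Fin n) ℝ :=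
  fun i j => μ i / rowSum A i * A i j

def colNormalize (ν : Fin n → ℝ) (A : Matrix (Fin m) (Fin n) ℝ) : Matrix (Fin m) (Fin n) ℝ :=
  fun i j => A i j * (ν j / colSum A j)

lemma mirrorUpdate_add_row (s : ℝ) (G A : Matrix (Fin m) (Fin n) ℝ) (r : Fin m → ℝ) :
    mirrorUpdate s (fun i j => G i j + r i) A =
      fun i j => Real.exp (-s * r i) * mirrorUpdate s G A i j := by
  ext i j
  simp only [mirrorUpdate, mul_add, Real.exp_add]
  ring

lemma mirrorUpdate_add_col (s : ℝ) (G A : Matrix (Fin m) (Fin n) ℝ) (c : Fin n → ℝ) :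
    mirrorUpdate s (fun i j => G i j + c j) A =
      fun i j => mirrorUpdate s G A i j * Real.exp (-s * c j) := by
  ext i j
  simp only [mirrorUpdate, mul_add, Real.exp_add]
  ring

lemma mirrorUpdate_pos {s : ℝ} {G A : Matrix (Fin m) (Fin n) ℝ} (hA : ∀ i j, 0 < A i j)
    (i : Fin m) (j : Fin n) : 0 < mirrorUpdate s G A i j :=
  mul_pos (hA i j) (Real.exp_pos _)

lemma rowSum_pos [Nonempty (Fin n)] {A : Matrix (Fin m) (Fin n) ℝ} (hA : ∀ i j, 0 < A i j)
    (i : Fin m) : 0 < rowSum A i :=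
  sum_pos (fun j _ => hA i j) univ_nonempty

lemma colSum_pos [Nonempty (Fin m)] {A : Matrix (Fin m) (Fin n) ℝ} (hA : ∀ i j, 0 < A i j)
    (j : Fin n) : 0 < colSum A j :=
  sum_pos (fun i _ => hA i j) univ_nonempty

lemma rowNormalize_scale_rows (μ : Fin m → ℝ) (A : Matrix (Fin m) (Fin n) ℝ) {c : Fin m → ℝ}
    (hc : ∀ i, c i ≠ 0) : rowNormalize μ (fun i j => c i * A i j) = rowNormalize μ A := by
  ext i j
  simp only [rowNormalize, rowSum, ← mul_sum, div_mul_eq_mul_div, mul_left_comm (μ i),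
    mul_div_mul_left _ _ (hc i)]

lemma colNormalize_scale_cols (ν : Fin n → ℝ) (A : Matrix (Fin m) (Fin n) ℝ) {c : Fin n → ℝ}
    (hc : ∀ j, c j ≠ 0) : colNormalize ν (fun i j => A i j * c j) = colNormalize ν A := by
  ext i j
  simp only [colNormalize, colSum, ← sum_mul]
  rw [mul_assoc, mul_div_assoc', mul_comm (c j), mul_div_mul_right _ _ (hc j)]

lemma rowSum_rowNormalize (μ : Fin m → ℝ) {A : Matrix (Fin m) (Fin n) ℝ}
    (hA : ∀ i, rowSum A i ≠ 0) : rowSum (rowNormalize μ A) = μ := by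
  ext i
  simp only [rowNormalize, rowSum, ← mul_sum]
  exact div_mul_cancel₀ _ (hA i)

lemma colSum_colNormalize (ν : Fin n → ℝ) {A : Matrix (Fin m) (Fin n) ℝ}
    (hA : ∀ j, colSum A j ≠ 0) : colSum (colNormalize ν A) = ν := by
  ext j
  simp only [colNormalize, colSum, ← sum_mul]
  exact mul_div_cancel₀ _ (hA j)

lemma rowNormalize_pos {μ : Fin m → ℝ} (hμ : ∀ i, 0 < μ i) [Nonempty (Fin n)]
    {A : Matrix (Fin m) (Fin n) ℝ} (hA : ∀ i j, 0 < A i j) (i : Fin m) (j : Fin n) :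
    0 < rowNormalize μ A i j :=
  mul_pos (div_pos (hμ i) (rowSum_pos hA i)) (hA i j)

lemma colNormalize_pos {ν : Fin n → ℝ} (hν : ∀ j, 0 < ν j) [Nonempty (Fin m)]
    {A : Matrix (Fin m) (Fin n) ℝ} (hA : ∀ i j, 0 < A i j) (i : Fin m) (j : Fin n) :
    0 < colNormalize ν A i j :=
  mul_pos (hA i j) (div_pos (hν j) (colSum_pos hA j))

variable {μ : Fin m → ℝ} {ν : Fin n → ℝ}
  {grad : Matrix (Fin m) (Fin n) ℝ → Matrix (Fin m) (Fin n) ℝ} {η : ℕ → ℝ}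

lemma msStep_of_even {t : ℕ} (ht : t % 2 = 0) (A : Matrix (Fin m) (Fin n) ℝ) :
    msStep μ ν grad η t A = rowNormalize μ (mirrorUpdate (η t) (grad A) A) :=
  if_pos ht

lemma msStep_of_odd {t : ℕ} (ht : t % 2 = 1) (A : Matrix (Fin m) (Fin n) ℝ) :
    msStep μ ν grad η t A = colNormalize ν (mirrorUpdate (η t) (grad A) A) :=
  if_neg (by omega)

lemma msStep_pos [Nonempty (Fin m)] [Nonempty (Fin n)] (hμ : ∀ i, 0 < μ i)
    (hν : ∀ j, 0 < ν j) (t : ℕ) {A : Matrix (Fin m) (Fin n) ℝ} (hA : ∀ i j, 0 < A i j) :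
    ∀ i j, 0 < msStep μ ν grad η t A i j := by
  rcases Nat.mod_two_eq_zero_or_one t with ht | ht
  · rw [msStep_of_even ht]
    exact rowNormalize_pos hμ (mirrorUpdate_pos hA)
  · rw [msStep_of_odd ht]
    exact colNormalize_pos hν (mirrorUpdate_pos hA)

lemma rowSum_msStep_of_even [Nonempty (Fin n)] {t : ℕ} (ht : t % 2 = 0)
    {A : Matrix (Fin m) (Fin n) ℝ} (hA : ∀ i j, 0 < A i j) :
    rowSum (msStep μ ν grad η t A) = μ := by
  rw [msStep_of_even ht]
  exact rowSum_rowNormalize μ fun i => (rowSum_pos (mirrorUpdate_pos hA) i).ne'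

lemma colSum_msStep_of_odd [Nonempty (Fin m)] {t : ℕ} (ht : t % 2 = 1)
    {A : Matrix (Fin m) (Fin n) ℝ} (hA : ∀ i j, 0 < A i j) :
    colSum (msStep μ ν grad η t A) = ν := by
  rw [msStep_of_odd ht]
  exact colSum_colNormalize ν fun j => (colSum_pos (mirrorUpdate_pos hA) j).ne'

lemma msStep_add_marginal_grad_of_even {gradRμ : (Fin m → ℝ) → Fin m → ℝ}
    {gradRν : (Fin n → ℝ) → Fin n → ℝ} (hgradRν : gradRν ν = 0) {t : ℕ} (ht : t % 2 = 0)
    {A : Matrix (Fin m) (Fin n) ℝ} (hA : colSum A = ν) :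
    msStep μ ν (fun A i j => grad A i j + gradRμ (rowSum A) i + gradRν (colSum A) j) η t A =
      msStep μ ν grad η t A := by
  rw [msStep_of_even ht]
  refine (msStep_of_even ht A).trans ?_
  simp only [hA, hgradRν, Pi.zero_apply, add_zero, mirrorUpdate_add_row]
  exact rowNormalize_scale_rows μ _ fun i => Real.exp_ne_zero _

lemma msStep_add_marginal_grad_of_odd {gradRμ : (Fin m → ℝ) → Fin m → ℝ}
    {gradRν : (Fin n → ℝ) → Fin n → ℝ} (hgradRμ : gradRμ μ = 0) {t : ℕ} (ht : t % 2 = 1)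
    {A : Matrix (Fin m) (Fin n) ℝ} (hA : rowSum A = μ) :
    msStep μ ν (fun A i j => grad A i j + gradRμ (rowSum A) i + gradRν (colSum A) j) η t A =
      msStep μ ν grad η t A := by
  rw [msStep_of_odd ht]
  refine (msStep_of_odd ht A).trans ?_
  simp only [hA, hgradRμ, Pi.zero_apply, add_zero, mirrorUpdate_add_col]
  exact colNormalize_scale_cols ν _ fun j => Real.exp_ne_zero _

end MirrorSinkhorn

theorem mirror_sinkhorn_regularization_invariance_general {m n : ℕ}
    (μ : Fin m → ℝ) (ν : Fin n → ℝ)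
    (hμ0 : ∀ i, 0 < μ i) (hμ1 : ∑ i, μ i = 1)
    (hν0 : ∀ j, 0 < ν j) (hν1 : ∑ j, ν j = 1)
    (gradRμ : (Fin m → ℝ) → (Fin m → ℝ)) (gradRν : (Fin n → ℝ) → (Fin n → ℝ))
    (hμiff : ∀ x, (∀ i, 0 ≤ x i) ∧ (∑ i, x i = 1) → (gradRμ x = 0 ↔ x = μ))
    (hνiff : ∀ y, (∀ j, 0 ≤ y j) ∧ (∑ j, y j = 1) → (gradRν y = 0 ↔ y = ν))
    (gradf : Matrix (Fin m) (Fin n) ℝ → Matrix (Fin m) (Fin n) ℝ)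
    (η : ℕ → ℝ)
    (γ γreg : ℕ → Matrix (Fin m) (Fin n) ℝ)
    (h0 : γ 0 = fun i j => μ i * ν j)
    (h0' : γreg 0 = fun i j => μ i * ν j)
    (hrec : ∀ t, γ (t + 1) = msStep μ ν gradf η t (γ t))
    (hrec' : ∀ t, γreg (t + 1) = msStep μ ν
      (fun A => fun i j => gradf A i j + gradRμ (rowSum A) i + gradRν (colSum A) j)
      η t (γreg t)) :
    ∀ t, γreg t = γ t := by
  have : Nonempty (Fin m) := univ_nonempty_iff.mp (nonempty_of_sum_ne_zero (hμ1 ▸ one_ne_zero))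
  have : Nonempty (Fin n) := univ_nonempty_iff.mp (nonempty_of_sum_ne_zero (hν1 ▸ one_ne_zero))
  have hgradRμ : gradRμ μ = 0 := (hμiff μ ⟨fun i => (hμ0 i).le, hμ1⟩).mpr rfl
  have hgradRν : gradRν ν = 0 := (hνiff ν ⟨fun j => (hν0 j).le, hν1⟩).mpr rfl
  have hpos : ∀ t i j, 0 < γ t i j := by
    intro t
    induction t with
    | zero => rw [h0]; exact fun i j => mul_pos (hμ0 i) (hν0 j)
    | succ t ih => rw [hrec]; exact msStep_pos hμ0 hν0 t ih
  have hmarginal : ∀ t, (t % 2 = 0 → colSum (γ t) = ν) ∧ (t % 2 = 1 → rowSum (γ t) = μ) := by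
    rintro (_ | t)
    · refine ⟨fun _ => ?_, by simp⟩
      ext j
      simp only [colSum, h0, ← sum_mul, hμ1, one_mul]
    · rw [hrec]
      exact ⟨fun _ => colSum_msStep_of_odd (by omega) (hpos t),
        fun _ => rowSum_msStep_of_even (by omega) (hpos t)⟩
  intro t
  induction t with
  | zero => rw [h0, h0']
  | succ t ih =>
    rw [hrec', hrec, ih]
    rcases Nat.mod_two_eq_zero_or_one t with ht | ht
    · exact msStep_add_marginal_grad_of_even hgradRν ht ((hmarginal t).1 ht)
    · exact msStep_add_marginal_grad_of_odd hgradRμ ht ((hmarginal t).2 ht)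

/-- Invariance of Mirror Sinkhorn under marginal regularization: replacing the objective
`f` by `f^reg(γ) = f(γ) + R_μ(γ1_n) + R_ν(γᵀ1_m)`, where `R_μ, R_ν` are nonnegative
differentiable convex functions on the simplex whose gradients vanish exactly at `μ`
(resp. `ν`), does not change the iterates of the algorithm started at `μνᵀ`. -/
theorem mirror_sinkhorn_regularization_invariance {m n : ℕ}
    (μ : Fin m → ℝ) (ν : Fin n → ℝ)
    (hμ0 : ∀ i, 0 < μ i) (hμ1 : ∑ i, μ i = 1)
    (hν0 : ∀ j, 0 < ν j) (hν1 : ∑ j, ν j = 1)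
    (Rμ : (Fin m → ℝ) → ℝ) (Rν : (Fin n → ℝ) → ℝ)
    (gradRμ : (Fin m → ℝ) → (Fin m → ℝ)) (gradRν : (Fin n → ℝ) → (Fin n → ℝ))
    (hRμconv : ConvexOn ℝ {x : Fin m → ℝ | (∀ i, 0 ≤ x i) ∧ ∑ i, x i = 1} Rμ)
    (hRνconv : ConvexOn ℝ {y : Fin n → ℝ | (∀ j, 0 ≤ y j) ∧ ∑ j, y j = 1} Rν)
    (hRμnn : ∀ x, (∀ i, 0 ≤ x i) ∧ (∑ i, x i = 1) → 0 ≤ Rμ x)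
    (hRνnn : ∀ y, (∀ j, 0 ≤ y j) ∧ (∑ j, y j = 1) → 0 ≤ Rν y)
    (hRμgrad : ∀ x, HasFDerivAt Rμ (∑ i, gradRμ x i • ContinuousLinearMap.proj (R := ℝ) (φ := fun _ : Fin m => ℝ) i) x)
    (hRνgrad : ∀ y, HasFDerivAt Rν (∑ j, gradRν y j • ContinuousLinearMap.proj (R := ℝ) (φ := fun _ : Fin n => ℝ) j) y)
    (hμiff : ∀ x, (∀ i, 0 ≤ x i) ∧ (∑ i, x i = 1) → (gradRμ x = 0 ↔ x = μ))
    (hνiff : ∀ y, (∀ j, 0 ≤ y j) ∧ (∑ j, y j = 1) → (gradRν y = 0 ↔ y = ν))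
    (gradf : Matrix (Fin m) (Fin n) ℝ → Matrix (Fin m) (Fin n) ℝ)
    (η : ℕ → ℝ)
    (γ γreg : ℕ → Matrix (Fin m) (Fin n) ℝ)
    (h0 : γ 0 = fun i j => μ i * ν j)
    (h0' : γreg 0 = fun i j => μ i * ν j)
    (hrec : ∀ t, γ (t + 1) = msStep μ ν gradf η t (γ t))
    (hrec' : ∀ t, γreg (t + 1) = msStep μ ν
      (fun A => fun i j => gradf A i j + gradRμ (rowSum A) i + gradRν (colSum A) j)
      η t (γreg t)) :
    ∀ t, γreg t = γ t :=
  mirror_sinkhorn_regularization_invariance_general μ ν hμ0 hμ1 hν0 hν1 gradRμ gradRν hμiff hνiff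
    gradf η γ γreg h0 h0' hrec hrec'
end
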